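/- arXiv:1112.3015 — 2 statements merged into one kernel-verified Lean document; each statement's English description precedes it below -/
import Mathlib

section
/- Let i ≥ 2 and N be positive integers, let m₁ ≤ C(N,i) and m₂ ≤ C(N,i−1) be positive integers, and set μ = min(m₂^(i−1), m₁). Let Δ₁ be the collection of all subsets of [N] = {1,...,N} of cardinality at most i−1, together with F_i(m₁) and F_{i+1}(m₁^(i)); let Δ₂ be the collection of all subsets of [N] of cardinality at most i−2, together with F_{i−1}(m₂) and F_i(μ). Then the collection Δ = Δ₁ ∪ { F ∪ {N+1} : F ∈ Δ₂ } of subsets of [N+1] is closed under taking subsets, i.e., Δ is a simplicial complex of dimension i. -/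
/-- The upper `i`-boundary `m^(i)`, computed greedily from the unique binomial
representation `m = C(n_i,i) + C(n_{i-1},i-1) + ... + C(n_j,j)`
(with `n_i > n_{i-1} > ... > n_j ≥ j ≥ 1`) as
`m^(i) = C(n_i,i+1) + C(n_{i-1},i) + ... + C(n_j,j+1)`;
by convention `0^(i) = 0`. -/
def ub : ℕ → ℕ → ℕ
  | 0, _ => 0
  | i + 1, m =>
    if m = 0 then 0
    else
      Nat.choose (Nat.findGreatest (fun t => Nat.choose t (i + 1) ≤ m) (m + i + 1)) (i + 2) +
        ub i (m - Nat.choose (Nat.findGreatest (fun t => Nat.choose t (i + 1) ≤ m) (m + i + 1)) (i + 1))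

/-- `firstColex i N` is the set `F_i(N)` consisting of the first `N` `i`-element
subsets of `ℕ` in the reverse lexicographic (colexicographic) order: an `i`-element
set `X` belongs to it exactly when fewer than `N` `i`-element sets precede it. -/
def firstColex (i N : ℕ) : Set (Finset ℕ) :=
  {X | X.card = i ∧
    {Y : Finset ℕ | Y.card = i ∧
      toColex Y < toColex X}.ncard < N}

/-- The complex `Δ₁`: all subsets of `{0, ..., N-1}` of cardinality at most `i - 1`,
together with `F_i(m₁)` and `F_{i+1}(m₁^(i))`. -/
def delta1 (N i m₁ : ℕ) : Set (Finset ℕ) :=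
  {s | s ⊆ Finset.range N ∧ s.card ≤ i - 1} ∪ firstColex i m₁ ∪
    firstColex (i + 1) (ub i m₁)

/-- The complex `Δ₂`: all subsets of `{0, ..., N-1}` of cardinality at most `i - 2`,
together with `F_{i-1}(m₂)` and `F_i(μ)` where `μ = min(m₂^(i-1), m₁)`. -/
def delta2 (N i m₁ m₂ : ℕ) : Set (Finset ℕ) :=
  {s | s ⊆ Finset.range N ∧ s.card ≤ i - 2} ∪ firstColex (i - 1) m₂ ∪
    firstColex i (min (ub (i - 1) m₂) m₁)


section Aux
open Finset Finset.Colex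

/-- Rank of a finite set in the colex order among sets of its own size. -/
def rnk (X : Finset ℕ) : ℕ := ∑ a ∈ X, Nat.choose a ({b ∈ X | b ≤ a}).card

@[simp] lemma rnk_empty : rnk ∅ = 0 := by simp [rnk]

lemma rnk_max (X : Finset ℕ) (h : X.Nonempty) :
    rnk X = Nat.choose (X.max' h) X.card + rnk (X.erase (X.max' h)) := by
  set M := X.max' h with hM
  rw [rnk, ← Finset.add_sum_erase _ _ (X.max'_mem h)]
  congr 1
  · congr 1
    rw [Finset.filter_true_of_mem (fun b hb => X.le_max' b hb)]
  · rw [rnk]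
    refine Finset.sum_congr rfl fun a ha => ?_
    have haM : a < M := lt_of_le_of_ne (X.le_max' a (Finset.mem_of_mem_erase ha))
      (Finset.ne_of_mem_erase ha)
    congr 2
    ext b
    simp only [Finset.mem_filter, Finset.mem_erase]
    constructor
    · rintro ⟨hb, hba⟩
      exact ⟨⟨fun hbM => absurd (hbM ▸ hba) (not_le.2 haM), hb⟩, hba⟩
    · rintro ⟨⟨_, hb⟩, hba⟩
      exact ⟨hb, hba⟩

lemma rnk_lt_choose : ∀ (k : ℕ) (Y : Finset ℕ), Y.card = k → ∀ b, (∀ a ∈ Y, a < b) →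
    rnk Y < Nat.choose b k := by
  intro k
  induction k with
  | zero => intro Y hY b _; rw [Finset.card_eq_zero.1 hY]; simp
  | succ k ih =>
    intro Y hY b hb
    have hne : Y.Nonempty := Finset.card_pos.1 (by omega)
    set M := Y.max' hne with hM
    have hMb : M < b := hb _ (Y.max'_mem hne)
    have h1 : rnk (Y.erase M) < Nat.choose M k := by
      refine ih _ (by rw [Finset.card_erase_of_mem (Y.max'_mem hne), hY]; rfl) M fun a ha => ?_
      exact lt_of_le_of_ne (Y.le_max' a (Finset.mem_of_mem_erase ha)) (Finset.ne_of_mem_erase ha)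
    have := rnk_max Y hne
    rw [this, hY]
    calc Nat.choose M (k+1) + rnk (Y.erase M) < Nat.choose M (k+1) + Nat.choose M k := by omega
      _ = Nat.choose (M+1) (k+1) := by rw [Nat.choose_succ_succ', Nat.add_comm]
      _ ≤ Nat.choose b (k+1) := Nat.choose_le_choose _ hMb

lemma subset_range_of_colex_lt {Y X : Finset ℕ} (h : toColex Y < toColex X)
    (hne : X.Nonempty) : Y ⊆ Finset.range (X.max' hne + 1) := by
  obtain ⟨a, haX, haY, hfa⟩ := toColex_lt_toColex_iff_exists_forall_lt.1 h
  intro b hb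
  rw [Finset.mem_range, Nat.lt_succ_iff]
  by_cases hbX : b ∈ X
  · exact X.le_max' b hbX
  · exact le_trans (hfa b hb hbX).le (X.le_max' a haX)

lemma colexLtSet_finite (X : Finset ℕ) (i : ℕ) :
    {Y : Finset ℕ | Y.card = i ∧ toColex Y < toColex X}.Finite := by
  rcases X.eq_empty_or_nonempty with rfl | hne
  · convert Set.finite_empty
    ext Y
    simp only [Set.mem_setOf_eq, Set.mem_empty_iff_false, iff_false, not_and]
    intro _
    rw [toColex_empty]
    exact not_lt_bot
  · apply Set.Finite.subset (Finset.range (X.max' hne + 1)).powerset.finite_toSet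
    intro Y hY
    simp only [Finset.coe_powerset, Set.mem_preimage, Set.mem_powerset_iff, Finset.coe_subset]
    exact subset_range_of_colex_lt hY.2 hne

lemma ncard_colexLt : ∀ (k : ℕ) (X : Finset ℕ), X.card = k →
    {Y : Finset ℕ | Y.card = k ∧ toColex Y < toColex X}.ncard = rnk X := by
  intro k
  induction k with
  | zero =>
    intro X hX
    rw [Finset.card_eq_zero.1 hX]
    have : {Y : Finset ℕ | Y.card = 0 ∧ toColex Y < toColex (∅ : Finset ℕ)} = ∅ := by
      ext Y
      simp only [Set.mem_setOf_eq, Set.mem_empty_iff_false, iff_false, not_and,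
        Finset.card_eq_zero]
      rintro rfl
      exact lt_irrefl _
    rw [this, Set.ncard_empty]
    simp [rnk]
  | succ k ih =>
    intro X hX
    have hne : X.Nonempty := Finset.card_pos.1 (by omega)
    set M := X.max' hne with hM
    set X' := X.erase M with hX'
    have hX'card : X'.card = k := by rw [hX', Finset.card_erase_of_mem (X.max'_mem hne), hX]; rfl
    have hX'M : ∀ a ∈ X', a < M := fun a ha =>
      lt_of_le_of_ne (X.le_max' a (Finset.mem_of_mem_erase ha)) (Finset.ne_of_mem_erase ha)
    -- the decomposition
    have hdec : {Y : Finset ℕ | Y.card = k + 1 ∧ toColex Y < toColex X}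
        = ↑((Finset.range M).powersetCard (k+1)) ∪
          ((fun Z => insert M Z) '' {Z : Finset ℕ | Z.card = k ∧ toColex Z < toColex X'}) := by
      ext Y
      simp only [Set.mem_setOf_eq, Set.mem_union, Finset.mem_coe, Finset.mem_powersetCard,
        Set.mem_image]
      constructor
      · rintro ⟨hYcard, hYX⟩
        by_cases hMY : M ∈ Y
        · refine Or.inr ⟨Y.erase M, ⟨by rw [Finset.card_erase_of_mem hMY, hYcard]; rfl, ?_⟩,
            Finset.insert_erase hMY⟩
          have := (toColex_sdiff_lt_toColex_sdiff (u := {M})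
            (Finset.singleton_subset_iff.2 hMY) (Finset.singleton_subset_iff.2 (X.max'_mem hne))).2 hYX
          simpa [Finset.sdiff_singleton_eq_erase] using this
        · refine Or.inl ⟨?_, hYcard⟩
          intro b hb
          rw [Finset.mem_range]
          by_cases hbX : b ∈ X
          · exact lt_of_le_of_ne (X.le_max' b hbX) (fun h => hMY (h ▸ hb))
          · obtain ⟨a, haX, haY, hfa⟩ := toColex_lt_toColex_iff_exists_forall_lt.1 hYX
            exact lt_of_lt_of_le (hfa b hb hbX) (X.le_max' a haX)
      · rintro (⟨hYsub, hYcard⟩ | ⟨Z, ⟨hZcard, hZX'⟩, rfl⟩)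
        · refine ⟨hYcard, toColex_lt_toColex_iff_exists_forall_lt.2
            ⟨M, X.max'_mem hne, fun hMY => by simpa using hYsub hMY, fun b hb _ => ?_⟩⟩
          simpa using hYsub hb
        · have hX'ne : X'.Nonempty := by
            rcases X'.eq_empty_or_nonempty with h | h
            · rw [h] at hZX'; rw [toColex_empty] at hZX'; exact absurd hZX' not_lt_bot
            · exact h
          have hZsub : Z ⊆ Finset.range M := by
            intro b hb
            rw [Finset.mem_range]
            have := subset_range_of_colex_lt hZX' hX'ne hb
            rw [Finset.mem_range, Nat.lt_succ_iff] at this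
            exact lt_of_le_of_lt this (hX'M _ (X'.max'_mem hX'ne))
          have hMZ : M ∉ Z := fun h => by simpa using hZsub h
          refine ⟨by rw [Finset.card_insert_of_notMem hMZ, hZcard], ?_⟩
          have : toColex ((insert M Z) \ {M}) < toColex (X \ {M}) := by
            rw [Finset.sdiff_singleton_eq_erase, Finset.sdiff_singleton_eq_erase,
              Finset.erase_insert hMZ]
            exact hZX'
          exact (toColex_sdiff_lt_toColex_sdiff (u := {M})
            (Finset.singleton_subset_iff.2 (Finset.mem_insert_self _ _))
            (Finset.singleton_subset_iff.2 (X.max'_mem hne))).1 this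
    have hMnot : ∀ Z : Finset ℕ, Z.card = k → toColex Z < toColex X' → M ∉ Z := by
      intro Z hZcard hZX' hMZ
      have hX'ne : X'.Nonempty := by
        rcases X'.eq_empty_or_nonempty with h | h
        · rw [h, toColex_empty] at hZX'; exact absurd hZX' not_lt_bot
        · exact h
      have := subset_range_of_colex_lt hZX' hX'ne hMZ
      rw [Finset.mem_range, Nat.lt_succ_iff] at this
      exact absurd (lt_of_le_of_lt this (hX'M _ (X'.max'_mem hX'ne))) (lt_irrefl M)
    have hinj : Set.InjOn (fun Z => insert M Z)
        {Z : Finset ℕ | Z.card = k ∧ toColex Z < toColex X'} := by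
      intro Z₁ h₁ Z₂ h₂ he
      have h1 := hMnot Z₁ h₁.1 h₁.2
      have h2 := hMnot Z₂ h₂.1 h₂.2
      simp only [] at he
      have : (insert M Z₁).erase M = (insert M Z₂).erase M := by rw [he]
      rwa [Finset.erase_insert h1, Finset.erase_insert h2] at this
    rw [hdec, Set.ncard_union_eq ?disj (Finset.finite_toSet _)
      (Set.Finite.image _ (colexLtSet_finite X' k))]
    case disj =>
      rw [Set.disjoint_left]
      rintro Y hY ⟨Z, ⟨hZcard, hZX'⟩, rfl⟩
      rw [Finset.mem_coe, Finset.mem_powersetCard] at hY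
      have := hY.1 (Finset.mem_insert_self M Z)
      simp at this
    rw [Set.ncard_coe_finset, Finset.card_powersetCard, Finset.card_range,
      Set.ncard_image_of_injOn hinj, ih X' hX'card, rnk_max X hne, hX]

@[simp] lemma ub_zero (j : ℕ) : ub j 0 = 0 := by cases j <;> simp [ub]

lemma add_one_le_choose : ∀ b : ℕ, 1 ≤ b → ∀ a : ℕ, a + 1 ≤ (a + b).choose b := by
  intro b
  induction b with
  | zero => omega
  | succ b ih =>
    intro _ a
    rcases Nat.eq_zero_or_pos b with rfl | hb
    · simp
    · have h1 := ih hb a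
      have : a + (b+1) = (a + b) + 1 := by omega
      rw [this, Nat.choose_succ_succ']
      omega

/-- The greedy top binomial coefficient index. -/
def fg (j m : ℕ) : ℕ := Nat.findGreatest (fun t => Nat.choose t (j + 1) ≤ m) (m + j + 1)

lemma fg_spec (j m : ℕ) :
    Nat.choose (fg j m) (j+1) ≤ m ∧ m < Nat.choose (fg j m + 1) (j+1) := by
  set n := fg j m with hn
  have hiff := (Nat.findGreatest_eq_iff (P := fun t => Nat.choose t (j + 1) ≤ m)
    (k := m + j + 1) (m := n)).1 hn.symm
  obtain ⟨hle, hP, hmax⟩ := hiff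
  constructor
  · rcases Nat.eq_zero_or_pos n with h0 | hpos
    · rw [h0]; simp [Nat.choose_eq_zero_of_lt]
    · exact hP (by omega)
  · by_contra hcon
    push_neg at hcon
    rcases le_or_gt (n + 1) (m + j + 1) with h | h
    · exact absurd (hmax (by omega) h hcon) (by simp)
    · -- n = m + j + 1, so n + 1 = m + j + 2, choose too big
      have hn' : n = m + j + 1 := by omega
      have : (m + 1) + 1 ≤ ((m + 1) + (j + 1)).choose (j+1) := add_one_le_choose (j+1) (by omega) (m+1)
      have he : (m + 1) + (j + 1) = n + 1 := by omega
      rw [he] at this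
      omega

lemma ub_succ (j m : ℕ) (hm : m ≠ 0) :
    ub (j+1) m = Nat.choose (fg j m) (j+2) + ub j (m - Nat.choose (fg j m) (j+1)) := by
  simp [ub, hm, fg]

lemma ub_le_choose : ∀ j n m : ℕ, m ≤ Nat.choose n j → ub j m ≤ Nat.choose n (j+1) := by
  intro j
  induction j with
  | zero => intro n m _; simp [ub]
  | succ j ih =>
    intro n m hm
    show ub (j+1) m ≤ Nat.choose n (j+2)
    rcases Nat.eq_zero_or_pos m with rfl | hmpos
    · simp
    obtain ⟨h1, h2⟩ := fg_spec j m
    set n' := fg j m with hn'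
    have hnj : j + 1 ≤ n := by
      by_contra h
      push_neg at h
      rw [Nat.choose_eq_zero_of_lt h] at hm
      omega
    have hch : Nat.choose (n+1) (j+2) = Nat.choose n (j+1) + Nat.choose n (j+2) :=
      Nat.choose_succ_succ' n (j+1)
    have hn'n : n' ≤ n := by
      by_contra h
      push_neg at h
      have hmono : Nat.choose (n+1) (j+1) ≤ Nat.choose n' (j+1) := Nat.choose_le_choose _ h
      have : Nat.choose n (j+1) < Nat.choose (n+1) (j+1) := by
        have := Nat.choose_succ_succ' n j
        have hpos : 0 < Nat.choose n j := Nat.choose_pos (by omega)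
        omega
      omega
    rw [ub_succ j m (by omega), ← hn']
    rcases eq_or_lt_of_le hn'n with rfl | hlt
    · -- n' = n : m = choose n (j+1), remainder 0
      have hm' : m = Nat.choose n' (j+1) := le_antisymm hm h1
      rw [hm', Nat.sub_self, ub_zero]
      simpa using Nat.choose_le_choose (j+2) (le_refl n')
    · have hrem : m - Nat.choose n' (j+1) ≤ Nat.choose n' j := by
        have := Nat.choose_succ_succ' n' j
        omega
      have hih := ih n' _ hrem
      have hsum : Nat.choose n' (j+1) + Nat.choose n' (j+2) = Nat.choose (n'+1) (j+2) := by
        rw [show j+2 = j+1+1 by omega]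
        exact (Nat.choose_succ_succ' n' (j+1)).symm
      have hle : Nat.choose (n'+1) (j+2) ≤ Nat.choose n (j+2) := Nat.choose_le_choose _ hlt
      omega

lemma rnk_erase_min : ∀ (j m : ℕ) (X : Finset ℕ) (hX : X.card = j + 2),
    rnk X < ub (j+1) m →
    rnk (X.erase (X.min' (Finset.card_pos.1 (by omega)))) < m := by
  intro j
  induction j using Nat.strong_induction_on with
  | _ j ih =>
    intro m X hX hub
    have hm : m ≠ 0 := by rintro rfl; rw [ub_zero] at hub; omega
    obtain ⟨h1, h2⟩ := fg_spec j m
    set n := fg j m with hn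
    rw [ub_succ j m hm, ← hn] at hub
    have hne : X.Nonempty := Finset.card_pos.1 (by omega)
    set M := X.max' hne with hM
    have hminmem := X.min'_mem (Finset.card_pos.1 (by omega : 0 < X.card))
    set mn := X.min' (Finset.card_pos.1 (by omega : 0 < X.card)) with hmn
    have hminM : mn < M := X.min'_lt_max'_of_card (by omega)
    have hMmem : M ∈ X := X.max'_mem hne
    set X' := X.erase M with hX'
    have hX'card : X'.card = j + 1 := by
      rw [hX', Finset.card_erase_of_mem hMmem, hX]
      omega
    have hrnkX : rnk X = Nat.choose M (j+2) + rnk X' := by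
      have := rnk_max X hne
      rwa [hX] at this
    have hrem : m - Nat.choose n (j+1) ≤ Nat.choose n j := by
      have := Nat.choose_succ_succ' n j
      omega
    have hubj : ub j (m - Nat.choose n (j+1)) ≤ Nat.choose n (j+1) :=
      ub_le_choose j n _ hrem
    -- erase min set
    set Y := X.erase mn with hY
    have hYcard : Y.card = j + 1 := by
      rw [hY, Finset.card_erase_of_mem hminmem, hX]
      omega
    have hYsub : Y ⊆ X := Finset.erase_subset _ _
    -- Step 1 : M ≤ n
    have hMn : M ≤ n := by
      by_contra hcon
      push_neg at hcon
      have hb1 : Nat.choose (n+1) (j+2) ≤ Nat.choose M (j+2) := Nat.choose_le_choose _ hcon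
      have hb2 : Nat.choose (n+1) (j+2) = Nat.choose n (j+1) + Nat.choose n (j+2) :=
        Nat.choose_succ_succ' n (j+1)
      omega
    rcases eq_or_lt_of_le hMn with heq | hMlt
    · -- M = n
      rw [← heq] at hub h1
      have hX'lt : rnk X' < ub j (m - Nat.choose M (j+1)) := by omega
      rcases Nat.eq_zero_or_pos j with rfl | hj
      · rw [show ub 0 (m - Nat.choose M 1) = 0 from rfl] at hX'lt
        omega
      · obtain ⟨j', rfl⟩ : ∃ j', j = j' + 1 := ⟨j - 1, by omega⟩
        have hmnX' : mn ∈ X' := Finset.mem_erase.2 ⟨by omega, hminmem⟩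
        have hX'ne : X'.Nonempty := ⟨mn, hmnX'⟩
        have hminX' : X'.min' (Finset.card_pos.1 (by omega : 0 < X'.card)) = mn := by
          refine le_antisymm (Finset.min'_le _ _ hmnX') ?_
          exact Finset.min'_le X _ (Finset.mem_of_mem_erase (X'.min'_mem _)) |>.trans_eq rfl
        have hihres := ih j' (by omega) (m - Nat.choose M (j'+2)) X' hX'card hX'lt
        rw [hminX'] at hihres
        -- now compute rnk Y
        have hMY : M ∈ Y := Finset.mem_erase.2 ⟨by omega, hMmem⟩
        have hYne : Y.Nonempty := ⟨M, hMY⟩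
        have hmaxY : Y.max' hYne = M := by
          refine le_antisymm (Finset.max'_le _ _ _ fun a ha => X.le_max' a (hYsub ha)) ?_
          exact Finset.le_max' _ _ hMY
        have hrnkY : rnk Y = Nat.choose M (j'+2) + rnk (Y.erase M) := by
          have := rnk_max Y hYne
          rwa [hYcard, hmaxY] at this
        have hYM : Y.erase M = X'.erase mn := by
          rw [hY, hX', Finset.erase_right_comm]
        rw [hrnkY, hYM]
        omega
    · -- M < n : crude bound
      have : rnk Y < Nat.choose n (j+1) := by
        refine rnk_lt_choose (j+1) Y hYcard n fun a ha => ?_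
        exact lt_of_le_of_lt (X.le_max' a (hYsub ha)) hMlt
      omega

lemma fc_mono {i N N' : ℕ} (h : N ≤ N') : firstColex i N ⊆ firstColex i N' :=
  fun _ hX => ⟨hX.1, lt_of_lt_of_le hX.2 h⟩

lemma mem_fc_iff_rnk {i N : ℕ} {X : Finset ℕ} :
    X ∈ firstColex i N ↔ X.card = i ∧ rnk X < N := by
  constructor
  · rintro ⟨h1, h2⟩
    exact ⟨h1, by rwa [ncard_colexLt i X h1] at h2⟩
  · rintro ⟨h1, h2⟩
    exact ⟨h1, by rwa [ncard_colexLt i X h1]⟩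

lemma fc_closed_le {i N : ℕ} {X Y : Finset ℕ} (hX : X ∈ firstColex i N)
    (hY : Y.card = i) (hle : toColex Y ≤ toColex X) : Y ∈ firstColex i N := by
  refine ⟨hY, lt_of_le_of_lt (Set.ncard_le_ncard ?_ (colexLtSet_finite X i)) hX.2⟩
  intro Z hZ
  exact ⟨hZ.1, lt_of_lt_of_le hZ.2 hle⟩

lemma fc_subset_range {i m N : ℕ} {X : Finset ℕ} (hX : X ∈ firstColex i m)
    (hm : m ≤ Nat.choose N i) : X ⊆ Finset.range N := by
  by_contra hcon
  obtain ⟨a, haX, haN⟩ : ∃ a ∈ X, N ≤ a := by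
    simp only [Finset.subset_iff, not_forall] at hcon
    obtain ⟨a, ha1, ha2⟩ := hcon
    exact ⟨a, ha1, by simpa using ha2⟩
  have hsub : ↑((Finset.range N).powersetCard i) ⊆
      {Y : Finset ℕ | Y.card = i ∧ toColex Y < toColex X} := by
    intro Y hY
    rw [Finset.mem_coe, Finset.mem_powersetCard] at hY
    refine ⟨hY.2, toColex_lt_toColex_iff_exists_forall_lt.2
      ⟨a, haX, fun h => by have := hY.1 h; simp at this; omega, fun b hb _ => ?_⟩⟩
    have := hY.1 hb
    simp at this
    omega
  have hcard : Nat.choose N i ≤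
      {Y : Finset ℕ | Y.card = i ∧ toColex Y < toColex X}.ncard := by
    have := Set.ncard_le_ncard hsub (colexLtSet_finite X i)
    rwa [Set.ncard_coe_finset, Finset.card_powersetCard, Finset.card_range] at this
  have := hX.2
  omega

lemma shadow_fc {j m : ℕ} {X Y : Finset ℕ} (hX : X ∈ firstColex (j+2) (ub (j+1) m))
    (hYX : Y ⊆ X) (hY : Y.card = j+1) : Y ∈ firstColex (j+1) m := by
  obtain ⟨hXcard, hXr⟩ := mem_fc_iff_rnk.1 hX
  have hne : 0 < X.card := by omega
  set mn := X.min' (Finset.card_pos.1 hne) with hmn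
  have hmin : rnk (X.erase mn) < m := rnk_erase_min j m X hXcard hXr
  have hmemmin : mn ∈ X := X.min'_mem _
  have hEcard : (X.erase mn).card = j + 1 := by
    rw [Finset.card_erase_of_mem hmemmin, hXcard]
    omega
  -- identify Y as X.erase a
  obtain ⟨a, haX, haY⟩ : ∃ a ∈ X, a ∉ Y := by
    by_contra hc
    push_neg at hc
    have : X = Y := Finset.Subset.antisymm hc hYX
    rw [this] at hXcard
    omega
  have hYa : Y = X.erase a := by
    refine Finset.eq_of_subset_of_card_le ?_ ?_
    · intro y hy
      exact Finset.mem_erase.2 ⟨fun h => haY (h ▸ hy), hYX hy⟩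
    · rw [Finset.card_erase_of_mem haX, hXcard, hY]
      omega
  have hle : toColex Y ≤ toColex (X.erase mn) := by
    rw [hYa]
    exact (erase_le_erase haX hmemmin).2 (X.min'_le a haX)
  exact fc_closed_le (mem_fc_iff_rnk.2 ⟨hEcard, hmin⟩) hY hle

lemma fc_card {i N : ℕ} {X : Finset ℕ} (hX : X ∈ firstColex i N) : X.card = i := hX.1

end Aux

/-- with `i ≥ 2`, `N ≥ 1`, positive `m₁ ≤ C(N,i)` and `m₂ ≤ C(N,i-1)`,
the collection `Δ = Δ₁ ∪ {F ∪ {N} : F ∈ Δ₂}` of subsets of `{0, ..., N}` (here the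
ground set `[N]` is realised as `{0, ..., N-1}` and the new vertex is `N`) is closed
under taking subsets, i.e., `Δ` is a simplicial complex. -/
theorem delta_union_isLowerSet (i N m₁ m₂ : ℕ) (hi : 2 ≤ i) (hN : 0 < N)
    (hm₁ : 0 < m₁) (hm₂ : 0 < m₂)
    (hm₁N : m₁ ≤ Nat.choose N i) (hm₂N : m₂ ≤ Nat.choose N (i - 1)) :
    ∀ G ∈ delta1 N i m₁ ∪ ((fun F => insert N F) '' delta2 N i m₁ m₂),
      ∀ F : Finset ℕ, F ⊆ G →
        F ∈ delta1 N i m₁ ∪ ((fun F => insert N F) '' delta2 N i m₁ m₂) := by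
  obtain ⟨j, rfl⟩ : ∃ j, i = j + 2 := ⟨i - 2, by omega⟩
  intro G hG F hF
  have hFG := Finset.card_le_card hF
  rcases hG with hG | ⟨G', hG', rfl⟩
  · rcases hG with (hG | hG) | hG
    · -- G small subset of range N
      exact Or.inl (Or.inl (Or.inl ⟨hF.trans hG.1, le_trans hFG hG.2⟩))
    · -- G ∈ firstColex (j+2) m₁
      have hGr : G ⊆ Finset.range N := fc_subset_range hG hm₁N
      have hGc : G.card = j + 2 := fc_card hG
      rcases eq_or_lt_of_le hFG with he | hlt
      · have : F = G := Finset.eq_of_subset_of_card_le hF (le_of_eq he.symm)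
        exact Or.inl (Or.inl (Or.inr (this ▸ hG)))
      · exact Or.inl (Or.inl (Or.inl ⟨hF.trans hGr, by omega⟩))
    · -- G ∈ firstColex (j+3) (ub (j+2) m₁)
      have hGc : G.card = j + 2 + 1 := fc_card hG
      rcases Nat.lt_or_ge F.card (j+2) with hc | hc
      · obtain ⟨Y, hFY, hYG, hYcard⟩ :=
          Finset.exists_subsuperset_card_eq hF (by omega : F.card ≤ j+2) (by omega)
        have hY : Y ∈ firstColex (j+2) m₁ := shadow_fc (j := j+1) hG hYG hYcard
        have hYr := fc_subset_range hY hm₁N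
        exact Or.inl (Or.inl (Or.inl ⟨hFY.trans hYr, by omega⟩))
      · rcases eq_or_lt_of_le hc with he | hlt
        · exact Or.inl (Or.inl (Or.inr (shadow_fc (j := j+1) hG hF he.symm)))
        · have : F = G := Finset.eq_of_subset_of_card_le hF (by omega)
          exact Or.inl (Or.inr (this ▸ hG))
  · -- G = insert N G'
    have hG'r : G' ⊆ Finset.range N := by
      rcases hG' with (h | h) | h
      · exact h.1
      · exact fc_subset_range h hm₂N
      · exact fc_subset_range (fc_mono (min_le_right _ _) h) hm₁N
    have hNG' : N ∉ G' := fun h => by simpa using hG'r h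
    by_cases hNF : N ∈ F
    · right
      refine ⟨F.erase N, ?_, by simpa using Finset.insert_erase hNF⟩
      have hEG' : F.erase N ⊆ G' := by
        intro x hx
        rcases Finset.mem_insert.1 (hF (Finset.mem_of_mem_erase hx)) with h | h
        · exact absurd h (Finset.ne_of_mem_erase hx)
        · exact h
      have hEcard := Finset.card_le_card hEG'
      rcases hG' with (h | h) | h
      · exact Or.inl (Or.inl ⟨hEG'.trans h.1, le_trans hEcard h.2⟩)
      · -- G' ∈ firstColex (j+1) m₂
        have hGc : G'.card = j + 1 := fc_card h
        rcases eq_or_lt_of_le hEcard with he | hlt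
        · have : F.erase N = G' := Finset.eq_of_subset_of_card_le hEG' (le_of_eq he.symm)
          exact Or.inl (Or.inr (this ▸ h))
        · exact Or.inl (Or.inl ⟨hEG'.trans (fc_subset_range h hm₂N), by omega⟩)
      · -- G' ∈ firstColex (j+2) μ
        have hGc : G'.card = j + 2 := fc_card h
        have hub : G' ∈ firstColex (j+2) (ub (j+1) m₂) :=
          fc_mono (min_le_left _ _) h
        rcases Nat.lt_or_ge (F.erase N).card (j+1) with hc | hc
        · obtain ⟨Y, hFY, hYG, hYcard⟩ :=
            Finset.exists_subsuperset_card_eq hEG' (by omega : (F.erase N).card ≤ j+1)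
              (by omega)
          have hY : Y ∈ firstColex (j+1) m₂ := shadow_fc hub hYG hYcard
          have hYr := fc_subset_range hY hm₂N
          exact Or.inl (Or.inl ⟨hFY.trans hYr, by omega⟩)
        · rcases eq_or_lt_of_le hc with he | hlt
          · exact Or.inl (Or.inr (shadow_fc hub hEG' he.symm))
          · have : F.erase N = G' := Finset.eq_of_subset_of_card_le hEG' (by omega)
            exact Or.inr (this ▸ h)
    · -- N ∉ F
      left
      have hFG' : F ⊆ G' := by
        intro x hx
        rcases Finset.mem_insert.1 (hF hx) with rfl | h
        · exact absurd hx hNF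
        · exact h
      have hFc := Finset.card_le_card hFG'
      rcases hG' with (h | h) | h
      · exact Or.inl (Or.inl ⟨hFG'.trans h.1, by have := h.2; omega⟩)
      · have hGc : G'.card = j + 1 := fc_card h
        exact Or.inl (Or.inl ⟨hFG'.trans (fc_subset_range h hm₂N), by omega⟩)
      · have hGc : G'.card = j + 2 := fc_card h
        have hg : G' ∈ firstColex (j+2) m₁ := fc_mono (min_le_right _ _) h
        rcases eq_or_lt_of_le hFc with he | hlt
        · have : F = G' := Finset.eq_of_subset_of_card_le hFG' (le_of_eq he.symm)
          exact Or.inl (Or.inr (this ▸ hg))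
        · exact Or.inl (Or.inl ⟨hFG'.trans (fc_subset_range hg hm₁N), by omega⟩)
end

section
/- For all positive integers m₁, m₂ and every integer i ≥ 2, one has (m₁ + m₂)^(i) ≥ m₁^(i) + min(m₂^(i−1), m₁). -/
lemma ub_zero_s8 : ∀ i, ub i 0 = 0
  | 0 => rfl
  | (i+1) => by simp [ub]

-- n + 1 ≤ C(n,ℓ) + ℓ  (i.e. n - ℓ + 1 ≤ C(n,ℓ))
lemma choose_lb {ℓ n : ℕ} (h1 : 1 ≤ ℓ) (h2 : ℓ ≤ n) : n + 1 ≤ n.choose ℓ + ℓ := by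
  have hsym : n.choose (n - ℓ) = n.choose ℓ := Nat.choose_symm h2
  have h3 : (n - ℓ) + 1 ≤ n := by omega
  have h4 : (n - ℓ + 1).choose (n - ℓ) ≤ n.choose (n - ℓ) := Nat.choose_le_choose _ h3
  have h5 : (n - ℓ + 1).choose (n - ℓ) = n - ℓ + 1 := Nat.choose_succ_self_right _
  omega

lemma exists_g {ℓ m : ℕ} (h1 : 1 ≤ ℓ) (hm : 1 ≤ m) :
    ∃ n, ℓ ≤ n ∧ n.choose ℓ ≤ m ∧ m < (n+1).choose ℓ := by
  classical
  set P : ℕ → Prop := fun t => t.choose ℓ ≤ m with hP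
  have hbound : ∀ t, P t → t ≤ m + ℓ - 1 := by
    intro t ht
    by_contra hc
    push_neg at hc
    have htℓ : ℓ ≤ t := by omega
    have := choose_lb h1 htℓ
    simp only [hP] at ht
    omega
  set n := Nat.findGreatest P (m + ℓ) with hn
  have hPl : P ℓ := by simp [hP, Nat.choose_self]; omega
  have hln : ℓ ≤ n := Nat.le_findGreatest (by omega) hPl
  have hPn : P n := Nat.findGreatest_spec (m := ℓ) (by omega) hPl
  have hnot : ¬ P (n + 1) := by
    have hb := hbound n hPn
    have hlt : Nat.findGreatest P (m + ℓ) < n + 1 := by rw [← hn]; exact Nat.lt_succ_self n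
    exact Nat.findGreatest_is_greatest hlt (by omega)
  exact ⟨n, hln, hPn, by simpa [hP] using hnot⟩

lemma ub_block {j n r : ℕ} (hn : j + 1 ≤ n) (hr : r < n.choose j) :
    ub (j+1) (n.choose (j+1) + r) = n.choose (j+2) + ub j r := by
  classical
  set m := n.choose (j+1) + r with hm
  have hpos : 1 ≤ n.choose (j+1) := Nat.choose_pos hn
  have hm1 : 1 ≤ m := by omega
  have hfg : Nat.findGreatest (fun t => Nat.choose t (j + 1) ≤ m) (m + j + 1) = n := by
    rw [Nat.findGreatest_eq_iff]
    have hcb := choose_lb (ℓ := j+1) (n := n) (by omega) hn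
    refine ⟨by omega, fun _ => by omega, ?_⟩
    intro k hk hkb
    simp only [not_le]
    have h1 : (n+1).choose (j+1) ≤ k.choose (j+1) := Nat.choose_le_choose _ hk
    have h2 : (n+1).choose (j+1) = n.choose j + n.choose (j+1) := Nat.choose_succ_succ n j
    omega
  show ub (j+1) m = n.choose (j+2) + ub j r
  rw [ub]
  simp only [hfg, if_neg (by omega : ¬ m = 0)]
  congr 1
  congr 1
  omega

lemma ub_boundary {j n : ℕ} (hn : j + 1 ≤ n) :
    ub (j+1) (n.choose (j+1)) = n.choose (j+2) := by
  have h := ub_block (j := j) (n := n) (r := 0) hn (Nat.choose_pos (by omega))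
  simpa [ub_zero_s8] using h

-- DROP: closed-interval block formula, needs j ≥ 1
lemma ub_block' {j n r : ℕ} (hj : 1 ≤ j) (hn : j + 1 ≤ n) (hr : r ≤ n.choose j) :
    ub (j+1) (n.choose (j+1) + r) = n.choose (j+2) + ub j r := by
  rcases lt_or_eq_of_le hr with h | h
  · exact ub_block hn h
  · subst h
    have hps : (n+1).choose (j+1) = n.choose j + n.choose (j+1) := Nat.choose_succ_succ n j
    have hl : n.choose (j+1) + n.choose j = (n+1).choose (j+1) := by omega
    rw [hl, ub_boundary (by omega : j + 1 ≤ n + 1)]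
    obtain ⟨k, rfl⟩ : ∃ k, j = k + 1 := ⟨j - 1, by omega⟩
    rw [ub_boundary (show k + 1 ≤ n by omega)]
    have h2 : (n+1).choose (k+1+2) = n.choose (k+2) + n.choose (k+1+2) := Nat.choose_succ_succ n (k+2)
    omega

lemma ub_one (m : ℕ) : ub 1 m = m.choose 2 := by
  rcases Nat.eq_zero_or_pos m with h | h
  · simp [h, ub_zero_s8]
  · have h0 : (0:ℕ) < m.choose 0 := by simp
    have := ub_block (j := 0) (n := m) (by omega) h0
    rw [Nat.choose_one_right] at this
    simpa [ub_zero_s8] using this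

lemma ub_mono : ∀ ℓ, Monotone (ub ℓ)
  | 0 => by intro a b _; simp [ub]
  | 1 => by
      intro a b h
      simp only [ub_one]
      exact Nat.choose_le_choose 2 h
  | (j+2) => by
      apply monotone_nat_of_le_succ
      intro m
      rcases Nat.eq_zero_or_pos m with h0 | h0
      · simp [h0, ub_zero_s8]
      obtain ⟨n, hn, h1, h2⟩ := exists_g (ℓ := j+2) (by omega) h0
      have hps : (n+1).choose (j+2) = n.choose (j+1) + n.choose (j+2) := Nat.choose_succ_succ n (j+1)
      obtain ⟨r, hr⟩ : ∃ r, m = n.choose (j+2) + r := ⟨m - n.choose (j+2), by omega⟩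
      have hrlt : r < n.choose (j+1) := by omega
      rcases lt_or_eq_of_le (show m + 1 ≤ (n+1).choose (j+2) by omega) with h3 | h3
      · have e1 : ub (j+2) m = n.choose (j+3) + ub (j+1) r := by
          rw [hr]; exact ub_block hn hrlt
        have e2 : ub (j+2) (m+1) = n.choose (j+3) + ub (j+1) (r+1) := by
          have : m + 1 = n.choose (j+2) + (r+1) := by omega
          rw [this]; exact ub_block hn (by omega)
        rw [e1, e2]
        exact Nat.add_le_add_left (ub_mono (j+1) (by omega : r ≤ r+1)) _
      · have e1 : ub (j+2) m = n.choose (j+3) + ub (j+1) r := by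
          rw [hr]; exact ub_block hn hrlt
        have e2 : ub (j+2) (m+1) = (n+1).choose (j+3) := by
          rw [h3]; exact ub_boundary (by omega)
        have e3 : ub (j+1) r ≤ ub (j+1) (n.choose (j+1)) := ub_mono (j+1) (by omega)
        have e4 : ub (j+1) (n.choose (j+1)) = n.choose (j+2) := ub_boundary (by omega)
        have e5 : (n+1).choose (j+3) = n.choose (j+2) + n.choose (j+3) := Nat.choose_succ_succ n (j+2)
        omega

def Spick (ℓ : ℕ) : Prop := ∀ a b, ub ℓ a + ub ℓ b ≤ ub ℓ (a + b)
def Gpick (ℓ : ℕ) : Prop := ∀ ν c p q, p ≤ q → q + c = Nat.choose ν ℓ →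
  ub ℓ (p + c) + ub ℓ q ≤ ub ℓ (q + c) + ub ℓ p
def Kpick (ℓ : ℕ) : Prop := ∀ ν c q s, ℓ ≤ ν → q + c = Nat.choose ν ℓ →
  (ub ℓ q + q ≤ ub ℓ s ∨ ub ℓ q + ub ℓ (c + s) ≤ ub ℓ (q + c) + ub ℓ s)
def Mpick (ℓ : ℕ) : Prop := ∀ a b, ub ℓ a + min (ub (ℓ - 1) b) a ≤ ub ℓ (a + b)

lemma c2succ (x : ℕ) : (x+1).choose 2 = x.choose 2 + x := by
  have h : (x+1).choose 2 = x.choose 1 + x.choose 2 := Nat.choose_succ_succ x 1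
  rw [Nat.choose_one_right] at h
  omega

lemma S1 : Spick 1 := by
  intro a b
  simp only [ub_one]
  induction b with
  | zero => simp [Nat.add_comm]
  | succ b ih =>
    have h1 : (a + (b+1)) = (a+b) + 1 := by omega
    rw [h1, c2succ, c2succ]
    omega

lemma G1 : Gpick 1 := by
  intro ν c p q hpq hq
  clear hq
  simp only [ub_one]
  induction c with
  | zero => simp [Nat.add_comm]
  | succ c ih =>
    have h1 : p + (c+1) = (p+c)+1 := by omega
    have h2 : q + (c+1) = (q+c)+1 := by omega
    rw [h1, h2, c2succ, c2succ]
    omega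

lemma K1 : Kpick 1 := by
  intro ν c q s _ hqc
  rcases le_or_gt s q with h | h
  · right
    have h2 := G1 ν c s q h hqc
    rw [Nat.add_comm c s]
    omega
  · left
    simp only [ub_one]
    have h1 : (q+1).choose 2 ≤ s.choose 2 := Nat.choose_le_choose 2 h
    have h2 := c2succ q
    omega

lemma M1 : Mpick 1 := by
  intro a b
  have : ub 0 b = 0 := rfl
  simp only [show (1:ℕ) - 1 = 0 from rfl, this, Nat.zero_min, Nat.add_zero]
  exact ub_mono 1 (by omega)

section Step
variable {j : ℕ}

lemma L5s (hS : Spick (j+1)) : ∀ n : ℕ, n.choose (j+3) ≤ ub (j+1) (n.choose (j+2)) := by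
  intro n
  induction n with
  | zero => simp [Nat.choose_eq_zero_of_lt]
  | succ n ih =>
    rcases lt_or_ge n (j+1) with h | h
    · have h2 : (n+1) < j+3 := by omega
      simp [Nat.choose_eq_zero_of_lt h2]
    · have hp1 : (n+1).choose (j+2) = n.choose (j+1) + n.choose (j+2) := Nat.choose_succ_succ n (j+1)
      have hp2 : (n+1).choose (j+3) = n.choose (j+2) + n.choose (j+3) := Nat.choose_succ_succ n (j+2)
      have hb : ub (j+1) (n.choose (j+1)) = n.choose (j+2) := ub_boundary h
      have hs := hS (n.choose (j+1)) (n.choose (j+2))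
      rw [hb] at hs
      rw [hp1, hp2]
      omega

lemma L2s (hS : Spick (j+1)) : ∀ m, ub (j+2) m ≤ ub (j+1) m := by
  intro m
  rcases Nat.eq_zero_or_pos m with h | h
  · simp [h, ub_zero_s8]
  obtain ⟨n, hn, h1, h2⟩ := exists_g (ℓ := j+2) (by omega) h
  have hps : (n+1).choose (j+2) = n.choose (j+1) + n.choose (j+2) := Nat.choose_succ_succ n (j+1)
  obtain ⟨r, hr⟩ : ∃ r, m = n.choose (j+2) + r := ⟨m - n.choose (j+2), by omega⟩
  have e1 : ub (j+2) m = n.choose (j+3) + ub (j+1) r := by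
    rw [hr]; exact ub_block hn (by omega)
  have hs := hS (n.choose (j+2)) r
  have h5 := L5s hS n
  rw [e1, hr]
  omega

lemma SUBBs (hS : Spick (j+1)) :
    ∀ z ν, j + 2 ≤ ν → ub (j+2) (ν.choose (j+2) + z) ≤ ν.choose (j+3) + ub (j+1) z := by
  intro z
  induction z using Nat.strong_induction_on with
  | _ z ih =>
    intro ν hν
    rcases le_or_gt z (ν.choose (j+1)) with h | h
    · exact le_of_eq (ub_block' (by omega) hν h)
    · have hlampos : 1 ≤ ν.choose (j+1) := Nat.choose_pos (by omega)
      obtain ⟨z', hz'⟩ : ∃ z', z = ν.choose (j+1) + z' := ⟨z - ν.choose (j+1), by omega⟩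
      have hps2 : (ν+1).choose (j+2) = ν.choose (j+1) + ν.choose (j+2) := Nat.choose_succ_succ ν (j+1)
      have hps3 : (ν+1).choose (j+3) = ν.choose (j+2) + ν.choose (j+3) := Nat.choose_succ_succ ν (j+2)
      have e : ν.choose (j+2) + z = (ν+1).choose (j+2) + z' := by omega
      have h1 := ih z' (by omega) (ν+1) (by omega)
      have hs := hS (ν.choose (j+1)) z'
      have hb : ub (j+1) (ν.choose (j+1)) = ν.choose (j+2) := ub_boundary (by omega)
      rw [hb] at hs
      rw [e, hz']
      omega

lemma choose_step_le {t k : ℕ} (h : t ≤ 2*k+1) : t.choose (k+1) ≤ t.choose k := by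
  have hid : t.choose (k+1) * (k+1) = t.choose k * (t - k) := Nat.choose_succ_right_eq t k
  have h2 : t.choose k * (t - k) ≤ t.choose k * (k+1) := Nat.mul_le_mul_left _ (by omega)
  have := hid.le.trans h2
  exact Nat.le_of_mul_le_mul_right this (by omega)

lemma choose_step_ge {t k : ℕ} (h : 2*k+1 ≤ t) : t.choose k ≤ t.choose (k+1) := by
  have hid : t.choose (k+1) * (k+1) = t.choose k * (t - k) := Nat.choose_succ_right_eq t k
  have h2 : t.choose k * (k+1) ≤ t.choose k * (t - k) := Nat.mul_le_mul_left _ (by omega)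
  have : t.choose k * (k+1) ≤ t.choose (k+1) * (k+1) := by omega
  exact Nat.le_of_mul_le_mul_right this (by omega)

lemma CROSSs (hS : Spick (j+1)) (hG : Gpick (j+1)) :
    ∀ t, j + 2 ≤ t → ∀ c qu qv, qu + c = t.choose (j+2) → qv + c = t.choose (j+1) →
      ub (j+2) (qu + c) + ub (j+1) qv ≤ ub (j+2) qu + ub (j+1) (qv + c) := by
  intro t ht
  induction t, ht using Nat.le_induction with
  | base =>
    intro c qu qv hqu hqv
    have h1 : qu + c = 1 := by rwa [Nat.choose_self] at hqu
    rcases (by omega : (c = 0) ∨ (c = 1 ∧ qu = 0)) with rfl | ⟨rfl, rfl⟩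
    · simp
    · have e1 : ub (j+2) (0+1) = 0 := by
        have := ub_boundary (j := j+1) (n := j+2) (by omega)
        rw [Nat.choose_self] at this
        rw [this]
        exact Nat.choose_eq_zero_of_lt (by omega)
      rw [e1, ub_zero_s8]
      simpa using ub_mono (j+1) (by omega : qv ≤ qv + 1)
  | succ t ht ih =>
    intro c qu qv hqu hqv
    have hps2 : (t+1).choose (j+2) = t.choose (j+1) + t.choose (j+2) := Nat.choose_succ_succ t (j+1)
    have hps1 : (t+1).choose (j+1) = t.choose j + t.choose (j+1) := Nat.choose_succ_succ t j
    have hps3 : (t+1).choose (j+3) = t.choose (j+2) + t.choose (j+3) := Nat.choose_succ_succ t (j+2)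
    have bM : ub (j+2) (qu + c) = (t+1).choose (j+3) := by
      rw [hqu]; exact ub_boundary (by omega)
    rcases le_or_gt c (t.choose (j+1)) with hc | hc
    · -- c ≤ λ
      obtain ⟨w, hw⟩ : ∃ w, w + c = t.choose (j+1) := ⟨t.choose (j+1) - c, by omega⟩
      have e2 : ub (j+2) qu = t.choose (j+3) + ub (j+1) w := by
        rw [show qu = t.choose (j+2) + w by omega]
        exact ub_block' (by omega) (by omega) (by omega)
      have hGi := hG (t+1) c w qv (by
          have := Nat.choose_le_choose (j+1) (show t ≤ t+1 by omega)
          omega) (by omega)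
      have bw : ub (j+1) (w + c) = t.choose (j+2) := by
        rw [hw]; exact ub_boundary (by omega)
      rw [bw] at hGi
      rw [bM, e2, hps3]
      omega
    · -- c > λ
      obtain ⟨c', hc'⟩ : ∃ c', c = t.choose (j+1) + c' := ⟨c - t.choose (j+1), by omega⟩
      have hcA : c' ≤ t.choose (j+2) := by
        have : c ≤ (t+1).choose (j+2) := by omega
        omega
      have hcB : c' ≤ t.choose j := by
        have : c ≤ (t+1).choose (j+1) := by omega
        omega
      have hcmid : c' ≤ t.choose (j+1) := by
        rcases le_or_gt (2*j+1) t with h2 | h2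
        · exact le_trans hcB (choose_step_ge h2)
        · exact le_trans hcA (choose_step_le (k := j+1) (by omega))
      -- IH at t with c'
      obtain ⟨wv, hwv⟩ : ∃ wv, wv + c' = t.choose (j+1) := ⟨t.choose (j+1) - c', by omega⟩
      have hqu' : qu + c' = t.choose (j+2) := by omega
      have hIH := ih c' qu wv hqu' hwv
      have bqc' : ub (j+2) (qu + c') = t.choose (j+3) := by
        rw [hqu']; exact ub_boundary (by omega)
      have bwv : ub (j+1) (wv + c') = t.choose (j+2) := by
        rw [hwv]; exact ub_boundary (by omega)
      rw [bqc', bwv] at hIH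
      -- (α) G at level j+1 : p := wv, q := qv + λ, c := c'
      have hα := hG (t+1) c' wv (qv + t.choose (j+1))
        (by omega)
        (by omega)
      rw [bwv, show qv + t.choose (j+1) + c' = qv + c by omega] at hα
      -- (β) superadd : v qv + v λ ≤ v (qv + λ)
      have hβ := hS qv (t.choose (j+1))
      have blam : ub (j+1) (t.choose (j+1)) = t.choose (j+2) := ub_boundary (by omega)
      rw [blam] at hβ
      rw [bM, hps3]
      omega

end Step

section Step2
variable {j : ℕ}

lemma Gs (hSJ : Spick (j+1)) (hGJ : Gpick (j+1)) : Gpick (j+2) := by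
  have hCR := CROSSs hSJ hGJ
  have main : ∀ ν, j + 2 ≤ ν → ∀ c p q, p ≤ q → q + c = ν.choose (j+2) →
      ub (j+2) (p+c) + ub (j+2) q ≤ ub (j+2) (q+c) + ub (j+2) p := by
    intro ν hν
    induction ν, hν using Nat.le_induction with
    | base =>
      intro c p q hpq hqc
      have h1 : q + c = 1 := by rwa [Nat.choose_self] at hqc
      rcases (by omega : (c = 0) ∨ (c = 1 ∧ q = 0)) with rfl | ⟨rfl, rfl⟩
      · simp only [Nat.add_zero]
        omega
      · have hp : p = 0 := by omega
        subst hp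
        omega
    | succ ν hν ih =>
      intro c p q hpq hqc
      have hps2 : (ν+1).choose (j+2) = ν.choose (j+1) + ν.choose (j+2) := Nat.choose_succ_succ ν (j+1)
      have hps3 : (ν+1).choose (j+3) = ν.choose (j+2) + ν.choose (j+3) := Nat.choose_succ_succ ν (j+2)
      have bM0 : ub (j+2) (ν.choose (j+2)) = ν.choose (j+3) := ub_boundary (by omega)
      have blam : ub (j+1) (ν.choose (j+1)) = ν.choose (j+2) := ub_boundary (by omega)
      have drop : ∀ x, x ≤ ν.choose (j+1) →
          ub (j+2) (ν.choose (j+2) + x) = ν.choose (j+3) + ub (j+1) x :=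
        fun x hx => ub_block' (by omega) (by omega) hx
      -- TM : tails at ν+1 dominate tails at ν
      have TM : ∀ d cc, d + cc = ν.choose (j+2) →
          ub (j+2) (ν.choose (j+2)) + ub (j+2) (d + ν.choose (j+1)) ≤
            ub (j+2) ((ν+1).choose (j+2)) + ub (j+2) d := by
        intro d cc hd
        have bM : ub (j+2) ((ν+1).choose (j+2)) = (ν+1).choose (j+3) := ub_boundary (by omega)
        rcases le_or_gt cc (ν.choose (j+1)) with hcc | hcc
        · obtain ⟨e, he⟩ : ∃ e, e + cc = ν.choose (j+1) := ⟨ν.choose (j+1) - cc, by omega⟩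
          have e1 : ub (j+2) (d + ν.choose (j+1)) = ν.choose (j+3) + ub (j+1) e := by
            rw [show d + ν.choose (j+1) = ν.choose (j+2) + e by omega]
            exact drop e (by omega)
          have hc1 := hCR ν (by omega) cc d e hd he
          have bd : ub (j+2) (d + cc) = ν.choose (j+3) := by rw [hd]; exact bM0
          rw [bd, show e + cc = ν.choose (j+1) from he, blam] at hc1
          rw [bM0, e1, bM, hps3]
          omega
        · obtain ⟨c2, hc2⟩ : ∃ c2, cc = ν.choose (j+1) + c2 := ⟨cc - ν.choose (j+1), by omega⟩
          -- d + λ + c2 = M₀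
          have hd2 : (d + c2) + ν.choose (j+1) = ν.choose (j+2) := by omega
          -- (F') window [d, d+λ] vs tail at M₀
          have hF := ih (ν.choose (j+1)) d (d + c2) (by omega) hd2
          rw [hd2, bM0] at hF
          -- (G'') cross with qv = 0
          have hGd := hCR ν (by omega) (ν.choose (j+1)) (d + c2) 0 hd2 (by omega)
          rw [hd2, bM0, ub_zero_s8, Nat.zero_add, blam] at hGd
          rw [bM0, bM, hps3]
          omega
      rcases le_or_gt (p + c) (ν.choose (j+2)) with h1 | h1
      · -- (1) window entirely below M₀
        obtain ⟨qt, hqt⟩ : ∃ qt, qt + c = ν.choose (j+2) := ⟨ν.choose (j+2) - c, by omega⟩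
        have hIH := ih c p qt (by omega) hqt
        rw [hqt, bM0] at hIH
        have hTM := TM qt c hqt
        rw [bM0] at hTM
        have hq : q = qt + ν.choose (j+1) := by omega
        have bM : ub (j+2) (q + c) = (ν+1).choose (j+3) := by
          rw [hqc]; exact ub_boundary (by omega)
        have bM' : ub (j+2) ((ν+1).choose (j+2)) = (ν+1).choose (j+3) := ub_boundary (by omega)
        rw [bM', ← hq] at hTM
        rw [bM]
        omega
      · rcases le_or_gt (ν.choose (j+2)) p with h2 | h2
        · -- (2) window entirely inside last block
          obtain ⟨p', hp'⟩ : ∃ p', p = ν.choose (j+2) + p' := ⟨p - ν.choose (j+2), by omega⟩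
          obtain ⟨q', hq'⟩ : ∃ q', q = ν.choose (j+2) + q' := ⟨q - ν.choose (j+2), by omega⟩
          have hq'c : q' + c = ν.choose (j+1) := by omega
          have hGi := hGJ ν c p' q' (by omega) hq'c
          have e1 : ub (j+2) (p + c) = ν.choose (j+3) + ub (j+1) (p' + c) := by
            rw [show p + c = ν.choose (j+2) + (p' + c) by omega]
            exact drop _ (by omega)
          have e2 : ub (j+2) q = ν.choose (j+3) + ub (j+1) q' := by
            rw [hq']; exact drop _ (by omega)
          have e3 : ub (j+2) (q + c) = ν.choose (j+3) + ub (j+1) (q' + c) := by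
            rw [show q + c = ν.choose (j+2) + (q' + c) by omega]
            exact drop _ (by omega)
          have e4 : ub (j+2) p = ν.choose (j+3) + ub (j+1) p' := by
            rw [hp']; exact drop _ (by omega)
          rw [e1, e2, e3, e4]
          omega
        · -- (3) straddling window
          obtain ⟨z, hz⟩ : ∃ z, p + c = ν.choose (j+2) + z := ⟨p + c - ν.choose (j+2), by omega⟩
          have hzlam : z ≤ ν.choose (j+1) := by omega
          have e1 : ub (j+2) (p + c) = ν.choose (j+3) + ub (j+1) z := by
            rw [hz]; exact drop _ hzlam
          rcases le_or_gt c (ν.choose (j+1)) with hc | hc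
          · -- c ≤ λ, q ≥ M₀
            obtain ⟨e, he⟩ : ∃ e, e + c = ν.choose (j+1) := ⟨ν.choose (j+1) - c, by omega⟩
            have e2 : ub (j+2) q = ν.choose (j+3) + ub (j+1) e := by
              rw [show q = ν.choose (j+2) + e by omega]
              exact drop _ (by omega)
            have e3 : ub (j+2) (q + c) = ν.choose (j+3) + ub (j+1) (ν.choose (j+1)) := by
              rw [show q + c = ν.choose (j+2) + ν.choose (j+1) by omega]
              exact drop _ (by omega)
            -- c₁ := M₀ - p,  w := z + e,  w + c₁ = λ
            have hD := hSJ z e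
            have hC := hCR ν (by omega) (ν.choose (j+2) - p) p (z + e)
              (by omega) (by omega)
            rw [show p + (ν.choose (j+2) - p) = ν.choose (j+2) by omega, bM0,
               show z + e + (ν.choose (j+2) - p) = ν.choose (j+1) by omega, blam] at hC
            rw [e1, e2, e3, blam]
            omega
          · -- c > λ : q below M₀
            obtain ⟨c', hcp⟩ : ∃ c', c = ν.choose (j+1) + c' := ⟨c - ν.choose (j+1), by omega⟩
            have hq : q + c' = ν.choose (j+2) := by omega
            -- λ - z = (M₀ - p) - c' ; q̂ + (λ - z) = M₀ ; p + (λ - z) = q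
            obtain ⟨lz, hlz⟩ : ∃ lz, z + lz = ν.choose (j+1) := ⟨ν.choose (j+1) - z, by omega⟩
            have hpq2 : p + lz = q := by omega
            obtain ⟨qh, hqh⟩ : ∃ qh, qh + lz = ν.choose (j+2) := ⟨ν.choose (j+2) - lz, by
              have : lz ≤ ν.choose (j+2) := by omega
              omega⟩
            have hF := ih lz p qh (by omega) hqh
            rw [hqh, bM0, hpq2] at hF
            have hG2 := hCR ν (by omega) lz qh z hqh (by omega)
            rw [hqh, bM0, show z + lz = ν.choose (j+1) from hlz, blam] at hG2
            have e3 : ub (j+2) (q + c) = ν.choose (j+3) + ub (j+1) (ν.choose (j+1)) := by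
              rw [show q + c = ν.choose (j+2) + ν.choose (j+1) by omega]
              exact drop _ (by omega)
            rw [e1, e3, blam]
            omega
  -- wrap up : arbitrary ν
  intro ν c p q hpq hqc
  rcases le_or_gt (j+2) ν with h | h
  · exact main ν h c p q hpq hqc
  · have : ν.choose (j+2) = 0 := Nat.choose_eq_zero_of_lt (by omega)
    have hq0 : q = 0 ∧ c = 0 := by omega
    obtain ⟨rfl, rfl⟩ := hq0
    have hp0 : p = 0 := by omega
    subst hp0
    omega

end Step2

section Step3
variable {j : ℕ}

lemma MAINs (hSJ : Spick (j+1)) (hKJ : Kpick (j+1)) : Mpick (j+2) := by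
  intro a b
  have hl : (j+2) - 1 = j+1 := rfl
  rw [hl]
  rcases Nat.eq_zero_or_pos a with rfl | ha
  · simp [ub_zero_s8]
  rcases Nat.eq_zero_or_pos b with rfl | hb
  · simp [ub_zero_s8]
  obtain ⟨n, hn, h1, h2⟩ := exists_g (ℓ := j+2) (by omega) (by omega : 1 ≤ a + b)
  have hps2 : (n+1).choose (j+2) = n.choose (j+1) + n.choose (j+2) := Nat.choose_succ_succ n (j+1)
  obtain ⟨s, hs⟩ : ∃ s, a + b = n.choose (j+2) + s := ⟨a + b - n.choose (j+2), by omega⟩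
  have hslt : s < n.choose (j+1) := by omega
  have e_ab : ub (j+2) (a+b) = n.choose (j+3) + ub (j+1) s := by
    rw [hs]; exact ub_block hn hslt
  rcases le_or_gt (n.choose (j+2)) a with hA | hB
  · -- case A
    obtain ⟨r, hr⟩ : ∃ r, a = n.choose (j+2) + r := ⟨a - n.choose (j+2), by omega⟩
    have hrb : r + b = s := by omega
    have e_a : ub (j+2) a = n.choose (j+3) + ub (j+1) r := by
      rw [hr]; exact ub_block hn (by omega)
    have hsu := hSJ r b
    rw [hrb] at hsu
    have hmin : min (ub (j+1) b) a ≤ ub (j+1) b := min_le_left _ _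
    omega
  · have hC2 : 2 ≤ n.choose (j+2) := by omega
    have hn3 : j + 3 ≤ n := by
      by_contra hcon
      have : n = j + 2 := by omega
      rw [this, Nat.choose_self] at hC2
      omega
    obtain ⟨n', rfl⟩ : ∃ n', n = n' + 1 := ⟨n - 1, by omega⟩
    have hn' : j + 2 ≤ n' := by omega
    have hq2 : (n'+1).choose (j+2) = n'.choose (j+1) + n'.choose (j+2) := Nat.choose_succ_succ n' (j+1)
    have hq3 : (n'+1).choose (j+3) = n'.choose (j+2) + n'.choose (j+3) := Nat.choose_succ_succ n' (j+2)
    rcases lt_or_ge a (n'.choose (j+2)) with hB0 | hB1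
    · -- B0 : window contains a full block
      have m1 : ub (j+2) a ≤ n'.choose (j+3) := by
        have := ub_mono (j+2) (le_of_lt hB0)
        rwa [ub_boundary hn'] at this
      have m2 : (n'+1).choose (j+3) ≤ ub (j+2) (a+b) := by
        have := ub_mono (j+2) h1
        rwa [ub_boundary (by omega : j + 1 + 1 ≤ n' + 1)] at this
      have hmin : min (ub (j+1) b) a ≤ a := min_le_right _ _
      omega
    · -- B1
      obtain ⟨ρ, hρ⟩ : ∃ ρ, a = n'.choose (j+2) + ρ := ⟨a - n'.choose (j+2), by omega⟩
      obtain ⟨c, hc⟩ : ∃ c, a + c = (n'+1).choose (j+2) := ⟨(n'+1).choose (j+2) - a, by omega⟩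
      have hρc : ρ + c = n'.choose (j+1) := by omega
      have hcs : c + s = b := by omega
      have e_a : ub (j+2) a = n'.choose (j+3) + ub (j+1) ρ := by
        rw [hρ]; exact ub_block' (by omega) hn' (by omega)
      rcases hKJ n' c ρ s (by omega) hρc with hL | hR
      · have hmin : min (ub (j+1) b) a ≤ a := min_le_right _ _
        omega
      · have bρc : ub (j+1) (ρ + c) = n'.choose (j+2) := by
          rw [hρc]; exact ub_boundary (by omega)
        rw [bρc, show c + s = b from hcs] at hR
        have hmin : min (ub (j+1) b) a ≤ ub (j+1) b := min_le_left _ _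
        omega

lemma KEYs (hG2 : Gpick (j+2)) (hM2 : Mpick (j+2)) (hSB : ∀ z ν, j + 2 ≤ ν →
    ub (j+2) (ν.choose (j+2) + z) ≤ ν.choose (j+3) + ub (j+1) z) : Kpick (j+2) := by
  intro ν c q s hν hqc
  rcases le_or_gt s q with h | h
  · right
    have hGi := hG2 ν c s q h hqc
    rw [Nat.add_comm s c] at hGi
    omega
  · obtain ⟨d, hd⟩ : ∃ d, s = q + d := ⟨s - q, by omega⟩
    have hM := hM2 q d
    have hl : (j+2) - 1 = j+1 := rfl
    rw [hl] at hM
    rcases le_or_gt q (ub (j+1) d) with hmin | hmin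
    · left
      rw [Nat.min_eq_right hmin] at hM
      rw [hd]
      exact hM
    · right
      rw [Nat.min_eq_left (le_of_lt hmin)] at hM
      have hsb := hSB d ν hν
      have ecs : c + s = ν.choose (j+2) + d := by omega
      have eqc : ub (j+2) (q + c) = ν.choose (j+3) := by
        rw [hqc]; exact ub_boundary (by omega)
      rw [← hd] at hM
      rw [ecs, eqc]
      omega

lemma Ss (hK2 : Kpick (j+2)) (hL2 : ∀ m, ub (j+2) m ≤ ub (j+1) m) (hSJ : Spick (j+1)) :
    Spick (j+2) := by
  intro a b
  rcases Nat.eq_zero_or_pos a with rfl | ha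
  · simp [ub_zero_s8]
  rcases Nat.eq_zero_or_pos b with rfl | hb
  · simp [ub_zero_s8]
  obtain ⟨n, hn, h1, h2⟩ := exists_g (ℓ := j+2) (by omega) (by omega : 1 ≤ a + b)
  have hps2 : (n+1).choose (j+2) = n.choose (j+1) + n.choose (j+2) := Nat.choose_succ_succ n (j+1)
  obtain ⟨s, hs⟩ : ∃ s, a + b = n.choose (j+2) + s := ⟨a + b - n.choose (j+2), by omega⟩
  have hslt : s < n.choose (j+1) := by omega
  have e_ab : ub (j+2) (a+b) = n.choose (j+3) + ub (j+1) s := by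
    rw [hs]; exact ub_block hn hslt
  rcases le_or_gt (n.choose (j+2)) a with hA | hBa
  · obtain ⟨r, hr⟩ : ∃ r, a = n.choose (j+2) + r := ⟨a - n.choose (j+2), by omega⟩
    have e_a : ub (j+2) a = n.choose (j+3) + ub (j+1) r := by
      rw [hr]; exact ub_block hn (by omega)
    have hsu := hSJ r b
    rw [show r + b = s by omega] at hsu
    have hb2 := hL2 b
    omega
  rcases le_or_gt (n.choose (j+2)) b with hAb | hBb
  · obtain ⟨r, hr⟩ : ∃ r, b = n.choose (j+2) + r := ⟨b - n.choose (j+2), by omega⟩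
    have e_b : ub (j+2) b = n.choose (j+3) + ub (j+1) r := by
      rw [hr]; exact ub_block hn (by omega)
    have hsu := hSJ r a
    rw [show r + a = s by omega] at hsu
    have ha2 := hL2 a
    omega
  · -- both below the boundary
    obtain ⟨c, hc⟩ : ∃ c, a + c = n.choose (j+2) := ⟨n.choose (j+2) - a, by omega⟩
    have hs' : b = c + s := by omega
    have hub : ub (j+2) s ≤ ub (j+1) s := hL2 s
    have hbB : ub (j+2) b ≤ n.choose (j+3) := by
      have := ub_mono (j+2) (le_of_lt hBb)
      rwa [ub_boundary hn] at this
    rcases hK2 n c a s (by omega) hc with hL | hR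
    · omega
    · have eqc : ub (j+2) (a + c) = n.choose (j+3) := by
        rw [hc]; exact ub_boundary (by omega)
      rw [eqc, ← hs'] at hR
      omega

end Step3

theorem pack : ∀ ℓ, 1 ≤ ℓ → Spick ℓ ∧ Gpick ℓ ∧ Kpick ℓ ∧ Mpick ℓ := by
  intro ℓ hℓ
  induction ℓ, hℓ using Nat.le_induction with
  | base => exact ⟨S1, G1, K1, M1⟩
  | succ m hm ih =>
    obtain ⟨j, rfl⟩ : ∃ j, m = j + 1 := ⟨m - 1, by omega⟩
    obtain ⟨hS, hG, hK, hM⟩ := ih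
    have hG2 : Gpick (j+2) := Gs hS hG
    have hM2 : Mpick (j+2) := MAINs hS hK
    have hSB := SUBBs (j := j) hS
    have hK2 : Kpick (j+2) := KEYs hG2 hM2 hSB
    have hS2 : Spick (j+2) := Ss hK2 (L2s hS) hS
    exact ⟨hS2, hG2, hK2, hM2⟩

/-- for all positive integers `m₁, m₂` and every integer `i ≥ 2`,
one has `(m₁ + m₂)^(i) ≥ m₁^(i) + min(m₂^(i-1), m₁)`. -/
theorem ub_add_ge (i m₁ m₂ : ℕ) (hi : 2 ≤ i) (hm₁ : 0 < m₁) (hm₂ : 0 < m₂) :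
    ub i m₁ + min (ub (i - 1) m₂) m₁ ≤ ub i (m₁ + m₂) := by
  exact (pack i (by omega)).2.2.2 m₁ m₂
end
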